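/- arXiv:1106.3820 — 6 statements merged into one kernel-verified Lean document; each statement's English description precedes it below -/
import Mathlib

section
/- Let (G, *, ≤) be a totally ordered commutative semigroup, i.e., a commutative semigroup G equipped with a linear order ≤ such that for all α, β, γ, δ ∈ G, α ≤ β and γ ≤ δ imply α * γ ≤ β * δ. Let n ≥ 1 and let a_1 ≤ a_2 ≤ ⋯ ≤ a_{2n} be elements of G, and let N ∈ G. Suppose there is a perfect matching of the index set {1, 2, …, 2n}, i.e., indices i_1, j_1, i_2, j_2, …, i_n, j_n with {i_1, j_1, i_2, j_2, …, i_n, j_n} = {1, 2, …, 2n}, such that a_{i_k} * a_{j_k} < N for every k = 1, …, n. Then a_k * a_{2n+1−k} < N for every k = 1, …, n. -/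
/-- **Upper Bounding** in a totally ordered commutative semigroup:
a commutative semigroup `G` with a linear order such that
`α ≤ β → γ ≤ δ → α * γ ≤ β * δ`.  Indices `0, …, 2n-1` (0-based) play the
role of `1, …, 2n`; the perfect matching is a bijection
`Fin n ⊕ Fin n ≃ Fin (2n)` given by `k ↦ i k` and `k ↦ j k`, and the
conclusion pairs `a_k` with `a_{2n-1-k} = a (Fin.rev k)` for `k < n`. -/
theorem upper_bounding_semigroup {G : Type*} [CommSemigroup G] [LinearOrder G]
    (hcompat : ∀ α β γ δ : G, α ≤ β → γ ≤ δ → α * γ ≤ β * δ)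
    (n : ℕ) (hn : 1 ≤ n) (a : Fin (2 * n) → G) (ha : Monotone a) (N : G)
    (i j : Fin n → Fin (2 * n))
    (hmatch : Function.Bijective (Sum.elim i j : Fin n ⊕ Fin n → Fin (2 * n)))
    (hlt : ∀ k : Fin n, a (i k) * a (j k) < N) :
    ∀ k : Fin (2 * n), (k : ℕ) < n → a k * a k.rev < N := by
  intro k hk
  set E : (Fin n ⊕ Fin n) ≃ Fin (2 * n) := Equiv.ofBijective _ hmatch with hE
  set P : Fin (2 * n) ≃ Fin (2 * n) :=
    E.symm.trans ((Equiv.sumComm (Fin n) (Fin n)).trans E) with hP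
  have hEl : ∀ m, E (Sum.inl m) = i m := fun m => rfl
  have hEr : ∀ m, E (Sum.inr m) = j m := fun m => rfl
  have hpair : ∀ x : Fin (2 * n), a x * a (P x) < N := by
    intro x
    have hx : E (E.symm x) = x := E.apply_symm_apply x
    have hPx : P x = E ((Equiv.sumComm (Fin n) (Fin n)) (E.symm x)) := rfl
    rcases h : E.symm x with m | m
    · rw [h, hEl] at hx
      rw [h] at hPx
      simp only [Equiv.sumComm_apply, Sum.swap_inl, hEr] at hPx
      rw [hPx, ← hx]
      exact hlt m
    · rw [h, hEr] at hx
      rw [h] at hPx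
      simp only [Equiv.sumComm_apply, Sum.swap_inr, hEl] at hPx
      rw [hPx, ← hx, mul_comm]
      exact hlt m
  by_cases hex : ∃ x : Fin (2 * n), k.rev ≤ x ∧ k ≤ P x
  · obtain ⟨x, hx1, hx2⟩ := hex
    calc a k * a k.rev ≤ a (P x) * a x := hcompat _ _ _ _ (ha hx2) (ha hx1)
      _ = a x * a (P x) := mul_comm _ _
      _ < N := hpair x
  · push_neg at hex
    exfalso
    have himg : (Finset.Ici k.rev).image P ⊆ Finset.Iio k := by
      intro y hy
      simp only [Finset.mem_image] at hy
      obtain ⟨x, hx, rfl⟩ := hy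
      exact Finset.mem_Iio.mpr (hex x (Finset.mem_Ici.mp hx))
    have h1 := Finset.card_le_card himg
    rw [Finset.card_image_of_injective _ P.injective, Fin.card_Ici, Fin.card_Iio,
      Fin.val_rev] at h1
    omega
end

section
/- Let (G, *, ≤) be a totally ordered commutative semigroup, i.e., a commutative semigroup G equipped with a linear order ≤ such that for all α, β, γ, δ ∈ G, α ≤ β and γ ≤ δ imply α * γ ≤ β * δ. Let n ≥ 1 and let a_1 ≤ a_2 ≤ ⋯ ≤ a_{2n} be elements of G, and let N ∈ G. Suppose there is a perfect matching of the index set {1, 2, …, 2n}, i.e., indices i_1, j_1, i_2, j_2, …, i_n, j_n with {i_1, j_1, i_2, j_2, …, i_n, j_n} = {1, 2, …, 2n}, such that a_{i_k} * a_{j_k} > N for every k = 1, …, n. Then a_k * a_{2n+1−k} > N for every k = 1, …, n. -/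
/-!
Pair every index `x` with its partner `σ x` in the matching, so that `N < a x * a (σ x)` for all
`x`. If `a k * a (2n+1-k) ≤ N`, then by monotonicity every `x ≤ k` must have `σ x > 2n+1-k`;
but `σ` is injective, and the `k` indices `x ≤ k` cannot all be sent into the `k - 1` indices
above `2n+1-k`.
-/

open Equiv Function

noncomputable def matchingPartner {ι α : Type*} {i j : ι → α} (h : Bijective (Sum.elim i j)) :
    Perm α :=
  (ofBijective _ h).permCongr (sumComm ι ι)

theorem forall_rel_matchingPartner {ι α : Type*} {i j : ι → α} (h : Bijective (Sum.elim i j))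
    {r : α → α → Prop} (hr : ∀ x y, r x y → r y x) (hij : ∀ m, r (i m) (j m)) (x : α) :
    r x (matchingPartner h x) := by
  obtain ⟨s, rfl⟩ := h.surjective x
  rw [matchingPartner, permCongr_apply, ← ofBijective_apply _ h, symm_apply_apply]
  rcases s with m | m
  exacts [hij m, hr _ _ (hij m)]

theorem Fin.exists_le_and_le_rev_of_injective {m : ℕ} {f : Fin m → Fin m} (hf : Injective f)
    (k : Fin m) : ∃ x ≤ k, f x ≤ k.rev := by
  by_contra! hbig
  have hcard := Finset.card_le_card_of_injOn f
    (fun x hx => Finset.mem_Ioi.mpr (hbig x (Finset.mem_Iic.mp hx))) hf.injOn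
  rw [Fin.card_Iic, Fin.card_Ioi, Fin.val_rev] at hcard
  omega

theorem lt_mul_rev_of_forall_lt_mul_apply {G : Type*} [Mul G] [LinearOrder G] [MulLeftMono G]
    [MulRightMono G] {m : ℕ} {a : Fin m → G} (ha : Monotone a) {N : G} {f : Fin m → Fin m}
    (hf : Injective f) (hN : ∀ x, N < a x * a (f x)) (k : Fin m) : N < a k * a k.rev := by
  obtain ⟨x, hxk, hfx⟩ := Fin.exists_le_and_le_rev_of_injective hf k
  exact (hN x).trans_le (mul_le_mul' (ha hxk) (ha hfx))

theorem lower_bounding_semigroup_general {G : Type*} [CommSemigroup G] [LinearOrder G]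
    (hcompat : ∀ α β γ δ : G, α ≤ β → γ ≤ δ → α * γ ≤ β * δ)
    (n : ℕ) (a : Fin (2 * n) → G) (ha : Monotone a) (N : G)
    (i j : Fin n → Fin (2 * n))
    (hmatch : Function.Bijective (Sum.elim i j : Fin n ⊕ Fin n → Fin (2 * n)))
    (hlt : ∀ k : Fin n, a (i k) * a (j k) > N) :
    ∀ k : Fin (2 * n), (k : ℕ) < n → a k * a k.rev > N := by
  have : MulLeftMono G := ⟨fun _ _ _ h => hcompat _ _ _ _ le_rfl h⟩
  have : MulRightMono G := ⟨fun _ _ _ h => hcompat _ _ _ _ h le_rfl⟩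
  have hpair : ∀ x, N < a x * a (matchingPartner hmatch x) :=
    forall_rel_matchingPartner hmatch (r := fun x y => N < a x * a y)
      (fun x y h => by simpa only [mul_comm] using h) hlt
  exact fun k _ => lt_mul_rev_of_forall_lt_mul_apply ha (matchingPartner hmatch).injective hpair k

/-- **Lower Bounding** in a totally ordered commutative semigroup:
a commutative semigroup `G` with a linear order such that
`α ≤ β → γ ≤ δ → α * γ ≤ β * δ`.  Indices `0, …, 2n-1` (0-based) play the
role of `1, …, 2n`; the perfect matching is a bijection
`Fin n ⊕ Fin n ≃ Fin (2n)` given by `k ↦ i k` and `k ↦ j k`, and the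
conclusion pairs `a_k` with `a_{2n-1-k} = a (Fin.rev k)` for `k < n`. -/
theorem lower_bounding_semigroup {G : Type*} [CommSemigroup G] [LinearOrder G]
    (hcompat : ∀ α β γ δ : G, α ≤ β → γ ≤ δ → α * γ ≤ β * δ)
    (n : ℕ) (hn : 1 ≤ n) (a : Fin (2 * n) → G) (ha : Monotone a) (N : G)
    (i j : Fin n → Fin (2 * n))
    (hmatch : Function.Bijective (Sum.elim i j : Fin n ⊕ Fin n → Fin (2 * n)))
    (hlt : ∀ k : Fin n, a (i k) * a (j k) > N) :
    ∀ k : Fin (2 * n), (k : ℕ) < n → a k * a k.rev > N :=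
  lower_bounding_semigroup_general hcompat n a ha N i j hmatch hlt
end

section
/- Let n ≥ 1 and let a_1 ≤ a_2 ≤ ⋯ ≤ a_{2n} be positive integers, and let N be an integer. Suppose there is a perfect matching of the index set {1, 2, …, 2n}, i.e., indices i_1, j_1, i_2, j_2, …, i_n, j_n with {i_1, j_1, i_2, j_2, …, i_n, j_n} = {1, 2, …, 2n}, such that a_{i_k} + a_{j_k} < N for every k = 1, …, n. Then a_k + a_{2n+1−k} < N for every k = 1, …, n. -/
/-- **Upper Bounding** for sums of positive integers.  Indices `0, …, 2n-1`
(0-based) play the role of `1, …, 2n`; the perfect matching is a bijection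
`Fin n ⊕ Fin n ≃ Fin (2n)` given by `k ↦ i k` and `k ↦ j k`, and the
conclusion pairs `a_k` with `a_{2n-1-k} = a (Fin.rev k)` for `k < n`. -/
theorem upper_bounding_int_sum (n : ℕ) (hn : 1 ≤ n) (a : Fin (2 * n) → ℤ)
    (hpos : ∀ k, 0 < a k) (ha : Monotone a) (N : ℤ)
    (i j : Fin n → Fin (2 * n))
    (hmatch : Function.Bijective (Sum.elim i j : Fin n ⊕ Fin n → Fin (2 * n)))
    (hlt : ∀ k : Fin n, a (i k) + a (j k) < N) :
    ∀ k : Fin (2 * n), (k : ℕ) < n → a k + a k.rev < N := by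
  intro k hk
  by_contra hN
  push_neg at hN
  set e : Fin n ⊕ Fin n ≃ Fin (2 * n) := Equiv.ofBijective _ hmatch with he
  set p : Fin (2 * n) → Fin (2 * n) := fun x => Sum.elim j i (e.symm x) with hp
  have key : ∀ x, a x + a (p x) < N := by
    intro x
    have hx : Sum.elim i j (e.symm x) = x := e.apply_symm_apply x
    rcases h : e.symm x with m | m
    · rw [h] at hx; simp only [Sum.elim_inl] at hx
      simp only [hp, h, Sum.elim_inl]
      rw [← hx]; exact hlt m
    · rw [h] at hx; simp only [Sum.elim_inr] at hx
      simp only [hp, h, Sum.elim_inr]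
      rw [← hx, add_comm]; exact hlt m
  have hinv : Function.Involutive p := by
    intro x
    have hx : Sum.elim i j (e.symm x) = x := e.apply_symm_apply x
    rcases h : e.symm x with m | m
    · rw [h] at hx; simp only [Sum.elim_inl] at hx
      have h2 : e.symm (j m) = Sum.inr m := by
        rw [Equiv.symm_apply_eq]; rfl
      simp only [hp, h, Sum.elim_inl, h2, Sum.elim_inr, hx]
    · rw [h] at hx; simp only [Sum.elim_inr] at hx
      have h2 : e.symm (i m) = Sum.inl m := by
        rw [Equiv.symm_apply_eq]; rfl
      simp only [hp, h, Sum.elim_inr, h2, Sum.elim_inl, hx]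
  have hmaps : ∀ x ∈ Finset.Ici k.rev, p x ∈ Finset.Iio k := by
    intro x hx
    rw [Finset.mem_Ici] at hx
    rw [Finset.mem_Iio]
    by_contra hplt
    push_neg at hplt
    have h1 : a k.rev ≤ a x := ha hx
    have h2 : a k ≤ a (p x) := ha hplt
    have := key x
    omega
  have hcard := Finset.card_le_card_of_injOn p hmaps (hinv.injective.injOn)
  rw [Fin.card_Ici, Fin.card_Iio] at hcard
  have hrev : (k.rev : ℕ) = 2 * n - 1 - k := by
    simp [Fin.rev]; omega
  have hk2 : (k : ℕ) < 2 * n := k.isLt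
  omega
end

section
/- Let n ≥ 1 and let a_1 ≥ a_2 ≥ ⋯ ≥ a_{2n} be positive real numbers, and let N be a real number. Suppose there is a perfect matching of the index set {1, 2, …, 2n}, i.e., indices i_1, j_1, i_2, j_2, …, i_n, j_n with {i_1, j_1, i_2, j_2, …, i_n, j_n} = {1, 2, …, 2n}, such that a_{i_k} + a_{j_k} > N for every k = 1, …, n. Then a_k + a_{2n+1−k} > N for every k = 1, …, n. -/
/-- **Lower Bounding** for sums of positive reals, with `a_1 ≥ a_2 ≥ ⋯ ≥ a_{2n}`.
Indices `0, …, 2n-1` (0-based) play the role of `1, …, 2n`; the perfect matching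
is a bijection `Fin n ⊕ Fin n ≃ Fin (2n)` given by `k ↦ i k` and `k ↦ j k`, and
the conclusion pairs `a_k` with `a_{2n-1-k} = a (Fin.rev k)` for `k < n`. -/
theorem lower_bounding_real_sum (n : ℕ) (hn : 1 ≤ n) (a : Fin (2 * n) → ℝ)
    (hpos : ∀ k, 0 < a k) (ha : Antitone a) (N : ℝ)
    (i j : Fin n → Fin (2 * n))
    (hmatch : Function.Bijective (Sum.elim i j : Fin n ⊕ Fin n → Fin (2 * n)))
    (hgt : ∀ k : Fin n, a (i k) + a (j k) > N) :
    ∀ k : Fin (2 * n), (k : ℕ) < n → a k + a k.rev > N := by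
  intro k hk
  set e : (Fin n ⊕ Fin n) ≃ Fin (2 * n) := Equiv.ofBijective _ hmatch with he
  set f : Fin (2 * n) → Fin n := (Sum.elim id id) ∘ e.symm with hf
  have hei : ∀ m, e (Sum.inl m) = i m := fun m => rfl
  have hej : ∀ m, e (Sum.inr m) = j m := fun m => rfl
  have hfi : ∀ m, f (i m) = m := by
    intro m; simp only [hf, Function.comp_apply, ← hei, Equiv.symm_apply_apply, Sum.elim_inl, id]
  have hfj : ∀ m, f (j m) = m := by
    intro m; simp only [hf, Function.comp_apply, ← hej, Equiv.symm_apply_apply, Sum.elim_inr, id]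
  have hfiber : ∀ x : Fin (2 * n), x = i (f x) ∨ x = j (f x) := by
    intro x
    rcases hs : e.symm x with m | m
    · left
      have : e (Sum.inl m) = x := by rw [← hs, Equiv.apply_symm_apply]
      rw [hei] at this
      rw [← this, hfi]
    · right
      have : e (Sum.inr m) = x := by rw [← hs, Equiv.apply_symm_apply]
      rw [hej] at this
      rw [← this, hfj]
  set B : Finset (Fin (2 * n)) := Finset.Iio k with hB
  set T : Finset (Fin (2 * n)) := Finset.Ici k.rev with hT
  have hcardB : B.card = (k : ℕ) := by rw [hB, Fin.card_Iio]
  have hrev : (k.rev : ℕ) = 2 * n - 1 - k := by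
    have := Fin.val_rev k; omega
  have hcardT : T.card = (k : ℕ) + 1 := by
    rw [hT, Fin.card_Ici, hrev]
    have := k.isLt
    omega
  -- disjointness: no element is in both B and T
  have hdisj : ∀ x : Fin (2 * n), x ∈ B → x ∈ T → False := by
    intro x hxB hxT
    rw [hB, Finset.mem_Iio] at hxB
    rw [hT, Finset.mem_Ici] at hxT
    have h1 : (x : ℕ) < k := hxB
    have h2 : (k.rev : ℕ) ≤ x := hxT
    omega
  -- find t ∈ T with f t ∉ B.image f
  have hexists : ∃ t ∈ T, f t ∉ B.image f := by
    by_contra hcon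
    push_neg at hcon
    have hinj : Set.InjOn f T := by
      intro t1 ht1 t2 ht2 hfeq
      by_contra hne
      set m := f t1 with hm
      have ht1' : t1 = i m ∨ t1 = j m := hfiber t1
      have ht2' : t2 = i m ∨ t2 = j m := by
        have := hfiber t2; rw [← hfeq] at this; exact this
      have hmB : m ∈ B.image f := hcon t1 ht1
      rw [Finset.mem_image] at hmB
      obtain ⟨b, hbB, hbm⟩ := hmB
      have hb' : b = i m ∨ b = j m := by
        have := hfiber b; rw [hbm] at this; exact this
      -- b equals t1 or t2
      have : b = t1 ∨ b = t2 := by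
        rcases hb' with hb | hb <;> rcases ht1' with h1 | h1 <;> rcases ht2' with h2 | h2 <;>
          first
            | (left; rw [hb, ← h1])
            | (right; rw [hb, ← h2])
            | (exact absurd (h1.trans h2.symm) hne)
      rcases this with hb | hb
      · exact hdisj b hbB (hb ▸ ht1)
      · exact hdisj b hbB (hb ▸ ht2)
    have h1 : T.card = (T.image f).card := (Finset.card_image_of_injOn hinj).symm
    have h2 : T.image f ⊆ B.image f := by
      intro m hm
      rw [Finset.mem_image] at hm
      obtain ⟨t, ht, rfl⟩ := hm
      exact hcon t ht
    have h3 : (T.image f).card ≤ (B.image f).card := Finset.card_le_card h2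
    have h4 : (B.image f).card ≤ B.card := Finset.card_image_le
    omega
  obtain ⟨t, htT, htm⟩ := hexists
  set m := f t with hm
  -- both i m and j m are not in B, hence ≥ k
  have hnotB : ∀ x : Fin (2 * n), f x = m → (k : ℕ) ≤ x := by
    intro x hx
    by_contra hlt
    push_neg at hlt
    have hxB : x ∈ B := by rw [hB, Finset.mem_Iio]; exact hlt
    exact htm (Finset.mem_image.mpr ⟨x, hxB, hx⟩)
  have hik : (k : ℕ) ≤ i m := hnotB _ (hfi m)
  have hjk : (k : ℕ) ≤ j m := hnotB _ (hfj m)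
  have htrev : (k.rev : ℕ) ≤ t := by rw [hT, Finset.mem_Ici] at htT; exact htT
  have hN := hgt m
  rcases hfiber t with ht | ht
  · -- t = i m : a (i m) ≤ a k.rev, a (j m) ≤ a k
    have hit : i m = t := ht.symm
    have h1 : a (i m) ≤ a k.rev := by
      apply ha; rw [Fin.le_def, hit]; exact htrev
    have h2 : a (j m) ≤ a k := ha hjk
    linarith
  · have hjt : j m = t := ht.symm
    have h1 : a (j m) ≤ a k.rev := by
      apply ha; rw [Fin.le_def, hjt]; exact htrev
    have h2 : a (i m) ≤ a k := ha hik
    linarith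
end

section
/- Let n ≥ 1 and let a_1 ≤ a_2 ≤ ⋯ ≤ a_{2n} be positive real numbers, and let N be a real number. Suppose there is a perfect matching of the index set {1, 2, …, 2n}, i.e., indices i_1, j_1, i_2, j_2, …, i_n, j_n with {i_1, j_1, i_2, j_2, …, i_n, j_n} = {1, 2, …, 2n}, such that a_{i_k} · a_{j_k} < N for every k = 1, …, n. Then a_k · a_{2n+1−k} < N for every k = 1, …, n. -/
/-- **Upper Bounding** for products of positive reals.  Indices `0, …, 2n-1`
(0-based) play the role of `1, …, 2n`; the perfect matching is a bijection
`Fin n ⊕ Fin n ≃ Fin (2n)` given by `k ↦ i k` and `k ↦ j k`, and the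
conclusion pairs `a_k` with `a_{2n-1-k} = a (Fin.rev k)` for `k < n`. -/
theorem upper_bounding_real_prod (n : ℕ) (hn : 1 ≤ n) (a : Fin (2 * n) → ℝ)
    (hpos : ∀ k, 0 < a k) (ha : Monotone a) (N : ℝ)
    (i j : Fin n → Fin (2 * n))
    (hmatch : Function.Bijective (Sum.elim i j : Fin n ⊕ Fin n → Fin (2 * n)))
    (hlt : ∀ k : Fin n, a (i k) * a (j k) < N) :
    ∀ k : Fin (2 * n), (k : ℕ) < n → a k * a k.rev < N := by
  intro k hk
  set e : Fin n ⊕ Fin n ≃ Fin (2 * n) := Equiv.ofBijective _ hmatch with he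
  set p : Fin (2 * n) → Fin (2 * n) := fun x => e (Sum.swap (e.symm x)) with hp
  have hpinj : Function.Injective p := by
    intro x y hxy
    have := e.injective hxy
    have h2 := congrArg Sum.swap this
    simp only [Sum.swap_swap] at h2
    exact e.symm.injective h2
  have hpN : ∀ x, a x * a (p x) < N := by
    intro x
    have hx : e (e.symm x) = x := e.apply_symm_apply x
    rcases hs : e.symm x with m | m
    · have hx1 : x = i m := by
        rw [hs] at hx; simpa [he, Equiv.ofBijective] using hx.symm
      have hx2 : p x = j m := by
        simp only [hp, hs, Sum.swap_inl]
        simp [he, Equiv.ofBijective]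
      rw [hx2, hx1]; exact hlt m
    · have hx1 : x = j m := by
        rw [hs] at hx; simpa [he, Equiv.ofBijective] using hx.symm
      have hx2 : p x = i m := by
        simp only [hp, hs, Sum.swap_inr]
        simp [he, Equiv.ofBijective]
      rw [hx2, hx1, mul_comm]; exact hlt m
  -- pigeonhole: some x ≥ k.rev has p x ≥ k
  have key : ∃ x : Fin (2 * n), k.rev ≤ x ∧ k ≤ p x := by
    by_contra h
    push_neg at h
    have hmaps : ∀ x ∈ Finset.Ici k.rev, p x ∈ Finset.Iio k := by
      intro x hx
      simp only [Finset.mem_Ici] at hx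
      simp only [Finset.mem_Iio]
      exact h x hx
    have hcard := Finset.card_le_card_of_injOn p hmaps (hpinj.injOn)
    rw [Fin.card_Ici, Fin.card_Iio, Fin.val_rev] at hcard
    omega
  obtain ⟨x, hx1, hx2⟩ := key
  have h1 : a k.rev ≤ a x := ha hx1
  have h2 : a k ≤ a (p x) := ha hx2
  calc a k * a k.rev ≤ a (p x) * a x :=
        mul_le_mul h2 h1 (hpos _).le (hpos _).le
    _ = a x * a (p x) := mul_comm _ _
    _ < N := hpN x
end

section
/- Let n ≥ 1 and let a_1 ≤ a_2 ≤ ⋯ ≤ a_{2n} be positive real numbers, and let N be a real number. Suppose there is a perfect matching of the index set {1, 2, …, 2n}, i.e., indices i_1, j_1, i_2, j_2, …, i_n, j_n with {i_1, j_1, i_2, j_2, …, i_n, j_n} = {1, 2, …, 2n}, such that a_{i_k} · a_{j_k} > N for every k = 1, …, n. Then a_k · a_{2n+1−k} > N for every k = 1, …, n. -/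
/-- **Lower Bounding** for products of positive reals.  Indices `0, …, 2n-1`
(0-based) play the role of `1, …, 2n`; the perfect matching is a bijection
`Fin n ⊕ Fin n ≃ Fin (2n)` given by `k ↦ i k` and `k ↦ j k`, and the
conclusion pairs `a_k` with `a_{2n-1-k} = a (Fin.rev k)` for `k < n`. -/
theorem lower_bounding_real_prod (n : ℕ) (hn : 1 ≤ n) (a : Fin (2 * n) → ℝ)
    (hpos : ∀ k, 0 < a k) (ha : Monotone a) (N : ℝ)
    (i j : Fin n → Fin (2 * n))
    (hmatch : Function.Bijective (Sum.elim i j : Fin n ⊕ Fin n → Fin (2 * n)))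
    (hgt : ∀ k : Fin n, a (i k) * a (j k) > N) :
    ∀ k : Fin (2 * n), (k : ℕ) < n → a k * a k.rev > N := by
  intro k hk
  have hinj := hmatch.1
  have hrev : (k.rev : ℕ) = 2 * n - (k + 1) := Fin.val_rev k
  -- key combinatorial claim
  have key : ∃ m : Fin n, i m ≤ k.rev ∧ j m ≤ k.rev ∧ ((i m : ℕ) ≤ k ∨ (j m : ℕ) ≤ k) := by
    by_contra hcon
    push_neg at hcon
    classical
    set B : Finset (Fin n) := Finset.univ.filter (fun m => i m ≤ k.rev ∧ j m ≤ k.rev) with hB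
    -- Bᶜ injects into Ioi k.rev
    have hc1 : Bᶜ.card ≤ (k : ℕ) := by
      have hmap : ∀ m ∈ Bᶜ, (if k.rev < i m then i m else j m) ∈ Finset.Ioi k.rev := by
        intro m hm
        simp only [Finset.mem_compl, hB, Finset.mem_filter, Finset.mem_univ, true_and] at hm
        rw [Decidable.not_and_iff_or_not, not_le, not_le] at hm
        by_cases h : k.rev < i m
        · simp [h, Finset.mem_Ioi]
        · rcases hm with hm | hm
          · exact absurd hm h
          · simp [h, Finset.mem_Ioi, hm]
      have hinj' : Set.InjOn (fun m => if k.rev < i m then i m else j m) ↑(Bᶜ) := by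
        intro m1 _ m2 _ h
        simp only at h
        split_ifs at h with h1 h2 h2
        · have := hinj (show Sum.elim i j (Sum.inl m1) = Sum.elim i j (Sum.inl m2) from h)
          simpa using this
        · have := hinj (show Sum.elim i j (Sum.inl m1) = Sum.elim i j (Sum.inr m2) from h)
          simp at this
        · have := hinj (show Sum.elim i j (Sum.inr m1) = Sum.elim i j (Sum.inl m2) from h)
          simp at this
        · have := hinj (show Sum.elim i j (Sum.inr m1) = Sum.elim i j (Sum.inr m2) from h)
          simpa using this
      calc Bᶜ.card ≤ (Finset.Ioi k.rev).card := Finset.card_le_card_of_injOn _ hmap hinj'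
        _ = 2 * n - 1 - (k.rev : ℕ) := Fin.card_Ioi k.rev
        _ ≤ (k : ℕ) := by omega
    have hcardB : n - (k : ℕ) ≤ B.card := by
      have htot : B.card + Bᶜ.card = n := by
        simpa using Finset.card_add_card_compl B
      omega
    -- B.disjSum B maps into Ioc k k.rev
    have e : Fin n ⊕ Fin n ≃ Fin (2 * n) := Equiv.ofBijective _ hmatch
    have hmap2 : ∀ s ∈ B.disjSum B, Sum.elim i j s ∈ Finset.Ioc k k.rev := by
      intro s hs
      rcases s with m | m <;>
        simp only [Finset.inl_mem_disjSum, Finset.inr_mem_disjSum, hB, Finset.mem_filter,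
          Finset.mem_univ, true_and] at hs <;>
        obtain ⟨h1, h2⟩ := hs
      · have h3 := hcon m h1 h2
        simp only [Sum.elim_inl, Finset.mem_Ioc]
        exact ⟨by rw [Fin.lt_def]; omega, h1⟩
      · have h3 := hcon m h1 h2
        simp only [Sum.elim_inr, Finset.mem_Ioc]
        exact ⟨by rw [Fin.lt_def]; omega, h2⟩
    have hinj2 : Set.InjOn (Sum.elim i j) ↑(B.disjSum B) := fun x _ y _ h => hinj h
    have hle : (B.disjSum B).card ≤ (Finset.Ioc k k.rev).card :=
      Finset.card_le_card_of_injOn _ hmap2 hinj2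
    rw [Finset.card_disjSum, Fin.card_Ioc] at hle
    omega
  obtain ⟨m, hi, hj, hlow⟩ := key
  have h1 : a (i m) ≤ a k.rev := ha hi
  have h2 : a (j m) ≤ a k.rev := ha hj
  rcases hlow with h | h
  · have h3 : a (i m) ≤ a k := ha (by rwa [Fin.le_def])
    calc N < a (i m) * a (j m) := hgt m
      _ ≤ a k * a k.rev :=
        mul_le_mul h3 h2 (hpos _).le (hpos _).le
  · have h3 : a (j m) ≤ a k := ha (by rwa [Fin.le_def])
    calc N < a (i m) * a (j m) := hgt m
      _ ≤ a k.rev * a k :=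
        mul_le_mul h1 h3 (hpos _).le (hpos _).le
      _ = a k * a k.rev := mul_comm _ _
end
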